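/- Let 𝒜 = (Q, A, δ, λ) be an invertible Mealy automaton such that the underlying DFA is nilpotent with sink s. Then the group G(𝒜) generated by the transformations {𝒜_q : q ∈ Q} acting on the rooted tree A* is finite. -/

import Mathlib

/-!
Nilpotency makes `s` a sink, and every state reaches `s` after reading `n` letters. Hence each
generator acts on a word `p ++ t` with `|p| = n` as some length-preserving map on `p` followed by
the letterwise permutation `λ_s` on `t`. Permutations of this shape form a subgroup, and such a
permutation is determined by its action on the finitely many words of length at most `n`
together with one permutation of `A`, so the subgroup is finite.
-/

/-- The action of a DFA transition function on words. -/
def dfaRun {Q A : Type*} (δ : Q → A → Q) (q : Q) (u : List A) : Q := u.foldl δ q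

/-- The sequential transformation of `A*` induced by a state of a Mealy automaton. -/
def mealyMap {Q A : Type*} (δ : Q → A → Q) (lam : Q → A → A) : Q → List A → List A
  | _, [] => []
  | q, a :: u => lam q a :: mealyMap δ lam (δ q a) u

section Automata

open Equiv

variable {Q A : Type*}

lemma dfaRun_append (δ : Q → A → Q) (q : Q) (u v : List A) :
    dfaRun δ q (u ++ v) = dfaRun δ (dfaRun δ q u) v :=
  List.foldl_append

lemma sink_of_nilpotent {δ : Q → A → Q} {s : Q} {n : ℕ}
    (hnilp : ∀ w : List A, n ≤ w.length → ∀ q : Q, dfaRun δ q w = s) (a : A) : δ s a = s := by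
  have hrep : dfaRun δ s (List.replicate n a) = s := hnilp _ (by simp) s
  have hsucc := hnilp (List.replicate n a ++ [a]) (by simp) s
  rwa [dfaRun_append, hrep] at hsucc

section Mealy

variable (δ : Q → A → Q) (lam : Q → A → A)

lemma length_mealyMap : ∀ (q : Q) (u : List A), (mealyMap δ lam q u).length = u.length
  | _, [] => rfl
  | q, a :: u => by simp [mealyMap, length_mealyMap (δ q a) u]

lemma mealyMap_append : ∀ (q : Q) (p t : List A),
    mealyMap δ lam q (p ++ t) = mealyMap δ lam q p ++ mealyMap δ lam (dfaRun δ q p) t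
  | _, [], _ => rfl
  | q, a :: p, t => by simp [mealyMap, mealyMap_append (δ q a) p t, dfaRun]

lemma mealyMap_of_isSink {s : Q} (hs : ∀ a, δ s a = s) :
    ∀ t : List A, mealyMap δ lam s t = t.map (lam s)
  | [] => rfl
  | a :: t => by simp [mealyMap, hs, mealyMap_of_isSink hs t]

end Mealy

variable (A) in
def letterwiseBeyond (n : ℕ) : Subgroup (Perm (List A)) where
  carrier := {g | (∀ u, (g u).length = u.length) ∧
    ∃ τ : Perm A, ∀ p t : List A, p.length = n → g (p ++ t) = g p ++ t.map τ}
  one_mem' := ⟨fun _ => rfl, 1, fun _ _ _ => by simp⟩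
  mul_mem' := by
    rintro x y ⟨hlx, τx, hτx⟩ ⟨hly, τy, hτy⟩
    refine ⟨fun u => by simp [hlx, hly], τx * τy, fun p t hp => ?_⟩
    have hyp : (y p).length = n := by rw [hly, hp]
    simp [hτy p t hp, hτx (y p) _ hyp]
  inv_mem' := by
    rintro g ⟨hl, τ, hτ⟩
    have hl' : ∀ u, (g⁻¹ u).length = u.length := fun u => by
      simpa using (hl (g⁻¹ u)).symm
    refine ⟨hl', τ⁻¹, fun p t hp => ?_⟩
    apply g.injective
    rw [hτ _ _ ((hl' p).trans hp)]
    simp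

lemma apply_eq_take_append_drop {n : ℕ} {g : Perm (List A)} {τ : Perm A}
    (hτ : ∀ p t : List A, p.length = n → g (p ++ t) = g p ++ t.map τ) (u : List A) :
    g u = g (u.take n) ++ (u.drop n).map τ := by
  rcases le_or_gt n u.length with hn | hn
  · rw [← hτ _ _ (List.length_take_of_le hn), List.take_append_drop]
  · simp [List.take_of_length_le hn.le, List.drop_of_length_le hn.le]

lemma letterwiseBeyond_finite [Finite A] (n : ℕ) :
    (letterwiseBeyond A n : Set (Perm (List A))).Finite := by
  let W := {l : List A // l.length ≤ n}
  have : Finite W := (List.finite_length_le A n).to_subtype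
  let extend : (W → W) × Perm A → List A → List A := fun fτ u =>
    (fτ.1 ⟨u.take n, by simp⟩ : List A) ++ (u.drop n).map fτ.2
  refine Set.Finite.of_finite_image (f := fun g : Perm (List A) => (g : List A → List A))
    ((Set.finite_range extend).subset ?_) DFunLike.coe_injective.injOn
  rintro _ ⟨g, ⟨hl, τ, hτ⟩, rfl⟩
  refine ⟨(fun w => ⟨g w, (hl w).trans_le w.2⟩, τ), funext fun u => ?_⟩
  exact (apply_eq_take_append_drop hτ u).symm

end Automata

theorem stmt11_general {Q A : Type*} [Fintype A] (δ : Q → A → Q) (lam : Q → A → A)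
    (hinv : ∀ q, Function.Bijective (lam q))
    (s : Q) (n : ℕ)
    (hnilp : ∀ w : List A, n ≤ w.length → ∀ q : Q, dfaRun δ q w = s)
    (e : Q → Equiv.Perm (List A)) (he : ∀ q u, e q u = mealyMap δ lam q u) :
    (Subgroup.closure (Set.range e) : Set (Equiv.Perm (List A))).Finite := by
  have hs : ∀ a, δ s a = s := sink_of_nilpotent hnilp
  have hgen : Set.range e ⊆ letterwiseBeyond A n := by
    rintro _ ⟨q, rfl⟩
    refine ⟨fun u => by rw [he, length_mealyMap], Equiv.ofBijective _ (hinv s), fun p t hp => ?_⟩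
    rw [he, he, mealyMap_append, hnilp p hp.ge q, mealyMap_of_isSink δ lam hs]
    rfl
  exact (letterwiseBeyond_finite n).subset ((Subgroup.closure_le _).2 hgen)

/-- The group generated by an invertible Mealy automaton whose underlying DFA is nilpotent
is finite. Here `e q` is the tree automorphism (permutation of `A*`) induced by state `q`. -/
theorem stmt11 {Q A : Type*} [Fintype Q] [Fintype A] (δ : Q → A → Q) (lam : Q → A → A)
    (hinv : ∀ q, Function.Bijective (lam q))
    (s : Q) (n : ℕ) (hn : 1 ≤ n)
    (hnilp : ∀ w : List A, n ≤ w.length → ∀ q : Q, dfaRun δ q w = s)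
    (e : Q → Equiv.Perm (List A)) (he : ∀ q u, e q u = mealyMap δ lam q u) :
    (Subgroup.closure (Set.range e) : Set (Equiv.Perm (List A))).Finite :=
  stmt11_general δ lam hinv s n hnilp e he
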